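/- arXiv:1504.07788 — 3 statements merged into one kernel-verified Lean document; each statement's English description precedes it below -/
import Mathlib

section
/- If (M, Δ) is a Garside monoid, then the set of Δ-normal words, viewed as a language over the finite alphabet Div(Δ), is a regular language. -/
/-- Left-divisibility: `f ≼ g` iff `f * c = g` for some `c`. -/
def LDvd {M : Type*} [Monoid M] (f g : M) : Prop := ∃ c, f * c = g

/-- Right-divisibility: `f` right-divides `g` iff `c * f = g` for some `c`. -/
def RDvd {M : Type*} [Monoid M] (f g : M) : Prop := ∃ c, c * f = g

/-- A Garside monoid: a cancellative monoid `M` together with a Garside element `Δ`,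
satisfying conditions (i)–(iv) of the definition. -/
structure GarsideMonoid (M : Type*) [Monoid M] where
  /-- The Garside element. -/
  Δ : M
  mul_left_cancel : ∀ a b c : M, a * b = a * c → b = c
  mul_right_cancel : ∀ a b c : M, b * a = c * a → b = c
  /-- (i) a superadditive length-type map. -/
  lam : M → ℕ
  lam_superadd : ∀ f g : M, lam f + lam g ≤ lam (f * g)
  lam_ne_zero : ∀ g : M, g ≠ 1 → lam g ≠ 0
  /-- (ii) any two elements admit a left-gcd. -/
  exists_left_gcd : ∀ f g : M, ∃ d, LDvd d f ∧ LDvd d g ∧ ∀ e, LDvd e f → LDvd e g → LDvd e d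
  /-- (ii) any two elements admit a right-lcm. -/
  exists_right_lcm : ∀ f g : M, ∃ m, LDvd f m ∧ LDvd g m ∧ ∀ e, LDvd f e → LDvd g e → LDvd m e
  /-- (ii) any two elements admit a right-gcd. -/
  exists_right_gcd : ∀ f g : M, ∃ d, RDvd d f ∧ RDvd d g ∧ ∀ e, RDvd e f → RDvd e g → RDvd e d
  /-- (ii) any two elements admit a left-lcm. -/
  exists_left_lcm : ∀ f g : M, ∃ m, RDvd f m ∧ RDvd g m ∧ ∀ e, RDvd f e → RDvd g e → RDvd m e
  /-- (iii) the left- and right-divisors of `Δ` coincide. -/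
  ldvd_iff_rdvd : ∀ d : M, LDvd d Δ ↔ RDvd d Δ
  /-- (iii) the divisors of `Δ` generate `M`. -/
  closure_div : Submonoid.closure {d : M | LDvd d Δ} = ⊤
  /-- (iv) `Div(Δ)` is finite. -/
  div_finite : {d : M | LDvd d Δ}.Finite

/-- A word `s_1|…|s_p` (with entries in `Div(Δ)`) is `Δ`-normal if, for every `i < p` and
every `s ∈ Div(Δ)`, `s_i ≺ s` implies that `s` does not left-divide `s_i s_{i+1} ⋯ s_p`. -/
def DNormal {M : Type*} [Monoid M] (G : GarsideMonoid M) (L : List M) : Prop :=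
  ∀ i : ℕ, i + 1 < L.length → ∀ s : M, LDvd s G.Δ →
    LDvd (L.getD i 1) s → L.getD i 1 ≠ s → ¬ LDvd s ((L.drop i).prod)

/-! A word over `Div(Δ)` is `Δ`-normal exactly when each of its length-two factors is. Indeed,
if `b` is the head of `b⋯`, every simple left-divisor `s` of `a · b⋯` already left-divides `a b`:
push `s` through `a` one simple factor `f` at a time, using that the right-lcm of `f` and `s` is
simple, so that its complement past `f` is simple too. Being a chain for a binary relation is a
local condition, and over a finite alphabet the chains have finitely many left quotients (one per
last letter, plus the empty one), so they form a regular language by Myhill–Nerode. -/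

theorem Language.isRegular_setOf_isChain {α : Type*} [Finite α] (R : α → α → Prop) :
    Language.IsRegular ({w | w.IsChain R} : Language α) := by
  classical
  apply Language.IsRegular.of_finite_range_leftQuotient
  refine ((Set.finite_range fun o : Option α ↦
    ({y | (o.toList ++ y).IsChain R} : Language α)).insert ∅).subset ?_
  rintro _ ⟨x, rfl⟩
  by_cases hx : x.IsChain R
  · refine Or.inr ⟨x.getLast?, ?_⟩
    ext y
    change (x.getLast?.toList ++ y).IsChain R ↔ (x ++ y).IsChain R
    cases h : x.getLast? <;> simp [List.isChain_append, List.isChain_cons, hx, h, and_comm]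
  · refine Or.inl (Set.eq_empty_of_forall_notMem fun y hy ↦ hx ?_)
    exact List.IsChain.left_of_append hy

section Divisibility

variable {M : Type*} [Monoid M]

theorem ldvd_mul_right (a b : M) : LDvd a (a * b) := ⟨b, rfl⟩

theorem LDvd.trans {a b c : M} : LDvd a b → LDvd b c → LDvd a c := by
  rintro ⟨u, rfl⟩ ⟨v, rfl⟩
  exact ⟨u * v, (mul_assoc a u v).symm⟩

theorem mul_ldvd_mul_left (c : M) {a b : M} : LDvd a b → LDvd (c * a) (c * b) := by
  rintro ⟨u, rfl⟩
  exact ⟨u, mul_assoc c a u⟩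

end Divisibility

namespace GarsideMonoid

variable {M : Type*} [Monoid M] (G : GarsideMonoid M)

def NoLargerSimpleLDvd (t x : M) : Prop :=
  ∀ s : M, LDvd s G.Δ → LDvd t s → t ≠ s → ¬ LDvd s x

def IsNormalPair (a b : M) : Prop :=
  G.NoLargerSimpleLDvd a (a * b)

theorem ldvd_of_noLargerSimpleLDvd {t x s : M} (ht : LDvd t G.Δ) (htx : LDvd t x)
    (h : G.NoLargerSimpleLDvd t x) (hs : LDvd s G.Δ) (hsx : LDvd s x) : LDvd s t := by
  obtain ⟨m, htm, hsm, hmin⟩ := G.exists_right_lcm t s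
  have hmt : t = m := by
    by_contra hne
    exact h m (hmin _ ht hs) htm hne (hmin _ htx hsx)
  exact hmt ▸ hsm

theorem exists_simple_ldvd_of_ldvd_mul_of_simple {f s g : M} (hf : LDvd f G.Δ)
    (hs : LDvd s G.Δ) (hsfg : LDvd s (f * g)) :
    ∃ v, LDvd v G.Δ ∧ LDvd v g ∧ LDvd s (f * v) := by
  obtain ⟨m, ⟨v, hfv⟩, hsm, hmin⟩ := G.exists_right_lcm f s
  obtain ⟨c, hfc⟩ := hf
  obtain ⟨w, hw⟩ := hmin (f * g) (ldvd_mul_right f g) hsfg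
  obtain ⟨z, hz⟩ := hmin G.Δ ⟨c, hfc⟩ hs
  have hvz : v * z = c := G.mul_left_cancel f _ _ (by rw [← mul_assoc, hfv, hz, hfc])
  have hvw : v * w = g := G.mul_left_cancel f _ _ (by rw [← mul_assoc, hfv, hw])
  -- the complement `c` of `f` in `Δ` right-divides `Δ`, hence is simple
  have hc : LDvd c G.Δ := (G.ldvd_iff_rdvd c).2 ⟨f, hfc⟩
  exact ⟨v, LDvd.trans ⟨z, hvz⟩ hc, ⟨w, hvw⟩, hfv ▸ hsm⟩

theorem exists_simple_ldvd_of_ldvd_mul (f : M) {s g : M} (hs : LDvd s G.Δ)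
    (hsfg : LDvd s (f * g)) : ∃ v, LDvd v G.Δ ∧ LDvd v g ∧ LDvd s (f * v) := by
  have hf : f ∈ Submonoid.closure {d : M | LDvd d G.Δ} := G.closure_div ▸ Submonoid.mem_top f
  induction hf using Submonoid.closure_induction generalizing s g with
  | one => exact ⟨s, hs, by rwa [one_mul] at hsfg, by rw [one_mul]; exact ⟨1, mul_one s⟩⟩
  | mem f hf => exact G.exists_simple_ldvd_of_ldvd_mul_of_simple hf hs hsfg
  | mul f₁ f₂ _ _ ih₁ ih₂ =>
    rw [mul_assoc] at hsfg
    obtain ⟨v₁, hv₁, hv₁g, hsv₁⟩ := ih₁ hs hsfg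
    obtain ⟨v, hv, hvg, hv₁v⟩ := ih₂ hv₁ hv₁g
    refine ⟨v, hv, hvg, hsv₁.trans ?_⟩
    simpa only [mul_assoc] using mul_ldvd_mul_left f₁ hv₁v

theorem noLargerSimpleLDvd_mul_iff {a b x : M} (hbx : LDvd b x)
    (hx : ∀ s, LDvd s G.Δ → LDvd s x → LDvd s b) :
    G.NoLargerSimpleLDvd a (a * x) ↔ G.NoLargerSimpleLDvd a (a * b) := by
  refine ⟨fun h s hs has hne hsab ↦ h s hs has hne (hsab.trans (mul_ldvd_mul_left a hbx)),
    fun h s hs has hne hsax ↦ ?_⟩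
  obtain ⟨v, hv, hvx, hsav⟩ := G.exists_simple_ldvd_of_ldvd_mul a hs hsax
  exact h s hs has hne (hsav.trans (mul_ldvd_mul_left a (hx v hv hvx)))

theorem dNormal_cons_cons {a b : M} {L : List M} :
    DNormal G (a :: b :: L) ↔
      G.NoLargerSimpleLDvd a (a * (b :: L).prod) ∧ DNormal G (b :: L) := by
  unfold DNormal
  rw [← Nat.and_forall_add_one]
  simp [NoLargerSimpleLDvd]

theorem ldvd_head_of_dNormal {b : M} {L : List M} (hL : DNormal G (b :: L)) (hb : LDvd b G.Δ)
    {s : M} (hs : LDvd s G.Δ) (hsL : LDvd s (b :: L).prod) : LDvd s b := by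
  cases L with
  | nil => simpa using hsL
  | cons c L =>
    exact G.ldvd_of_noLargerSimpleLDvd hb (ldvd_mul_right _ _) (G.dNormal_cons_cons.1 hL).1 hs hsL

theorem dNormal_iff_isChain {L : List M} (hL : ∀ x ∈ L, LDvd x G.Δ) :
    DNormal G L ↔ L.IsChain G.IsNormalPair := by
  induction L with
  | nil => simp [DNormal]
  | cons a L ih =>
    cases L with
    | nil => simp [DNormal]
    | cons b L =>
      rw [dNormal_cons_cons, List.isChain_cons_cons, ← ih fun x hx ↦ hL x (.tail a hx)]
      refine and_congr_left fun hbL ↦ G.noLargerSimpleLDvd_mul_iff ?_ fun s hs hsL ↦ ?_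
      · rw [List.prod_cons]; exact ldvd_mul_right b _
      · exact G.ldvd_head_of_dNormal hbL (hL b (by simp)) hs hsL

end GarsideMonoid

/-- In a Garside monoid `(M, Δ)`, the set of `Δ`-normal words, viewed as
a language over the (finite) alphabet `Div(Δ)`, is a regular language. -/
theorem garsideMonoid_deltaNormal_regular {M : Type*} [Monoid M] (G : GarsideMonoid M) :
    Language.IsRegular
      { w : List {d : M // LDvd d G.Δ} | DNormal G (w.map Subtype.val) } := by
  have : Finite {d : M // LDvd d G.Δ} := G.div_finite.to_subtype
  have hchain : { w : List {d : M // LDvd d G.Δ} | DNormal G (w.map Subtype.val) } =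
      { w | w.IsChain fun a b ↦ G.IsNormalPair a.1 b.1 } :=
    Set.ext fun w ↦ (G.dNormal_iff_isChain (by simp +contextual)).trans (List.isChain_map _)
  rw [hchain]
  exact Language.isRegular_setOf_isChain _
end

section
/- If (M, Δ) is a Garside monoid, then for all s_1, s_2 in Div(Δ) there exist unique s'_1, s'_2 in Div(Δ) such that s'_1 s'_2 = s_1 s_2 in M and the length-two word s'_1|s'_2 is Δ-normal; namely s'_1 is the left-gcd of s_1 s_2 and Δ. -/
/-!
The first factor of a normal pair is forced: for `a ∈ Div(Δ)`, the word `a|b` is `Δ`-normal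
exactly when `a` is the left-gcd of `a b` and `Δ`. So the only candidate for `s'₁` is
`d = gcd(s₁ s₂, Δ)`, and `s'₂` is then determined by cancellation. Conversely, writing
`s₁ s₂ = d t`, the factor `t` lies in `Div(Δ)` because `s₁ ≼ d` makes `t` a right-divisor
of `s₂`.
-/

def IsLeftGcd {M : Type*} [Monoid M] (d f g : M) : Prop :=
  LDvd d f ∧ LDvd d g ∧ ∀ e, LDvd e f → LDvd e g → LDvd e d

namespace GarsideMonoid

variable {M : Type*} [Monoid M]

theorem lam_one (G : GarsideMonoid M) : G.lam 1 = 0 := by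
  have := G.lam_superadd 1 1
  rw [mul_one] at this
  omega

theorem eq_one_of_mul_eq_one (G : GarsideMonoid M) {c c' : M} (h : c * c' = 1) : c = 1 := by
  by_contra hc
  have := G.lam_superadd c c'
  rw [h, G.lam_one] at this
  exact G.lam_ne_zero c hc (by omega)

theorem ldvd_antisymm (G : GarsideMonoid M) {a b : M} : LDvd a b → LDvd b a → a = b := by
  rintro ⟨c, rfl⟩ ⟨c', hc'⟩
  have hcc' : c * c' = 1 := G.mul_left_cancel a _ _ (by rw [← mul_assoc, hc', mul_one])
  rw [G.eq_one_of_mul_eq_one hcc', mul_one]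

theorem isLeftGcd_unique (G : GarsideMonoid M) {d d' f g : M} (hd : IsLeftGcd d f g)
    (hd' : IsLeftGcd d' f g) : d = d' :=
  G.ldvd_antisymm (hd'.2.2 d hd.1 hd.2.1) (hd.2.2 d' hd'.1 hd'.2.1)

theorem ldvd_delta_of_rdvd (G : GarsideMonoid M) {s t : M} (hts : RDvd t s)
    (hs : LDvd s G.Δ) : LDvd t G.Δ := by
  obtain ⟨u, rfl⟩ := hts
  obtain ⟨c, hc⟩ := (G.ldvd_iff_rdvd _).mp hs
  exact (G.ldvd_iff_rdvd t).mpr ⟨c * u, by rw [mul_assoc, hc]⟩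

theorem dNormal_pair_iff (G : GarsideMonoid M) {a b : M} :
    DNormal G [a, b] ↔ ∀ s, LDvd s G.Δ → LDvd a s → LDvd s (a * b) → a = s := by
  simp only [DNormal, List.length_cons, List.length_nil]
  constructor
  · intro h s hs has hsab
    by_contra hne
    exact h 0 (by omega) s hs has hne (by simpa)
  · intro h i hi s hs has hne hsab
    obtain rfl : i = 0 := by omega
    exact hne (h s hs has (by simpa using hsab))

theorem dNormal_pair_iff_isLeftGcd (G : GarsideMonoid M) {a b : M} (ha : LDvd a G.Δ) :
    DNormal G [a, b] ↔ IsLeftGcd a (a * b) G.Δ := by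
  rw [dNormal_pair_iff]
  constructor
  · intro hnormal
    obtain ⟨d, hd⟩ := G.exists_left_gcd (a * b) G.Δ
    have had : a = d := hnormal d hd.2.1 (hd.2.2 a ⟨b, rfl⟩ ha) hd.1
    exact had ▸ hd
  · intro hgcd s hs has hsab
    exact G.ldvd_antisymm has (hgcd.2.2 s hsab hs)

end GarsideMonoid

/-- In a Garside monoid `(M, Δ)`, for all `s₁, s₂ ∈ Div(Δ)` there are
unique `s'₁, s'₂ ∈ Div(Δ)` with `s'₁ s'₂ = s₁ s₂` and `s'₁|s'₂` `Δ`-normal; moreover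
`s'₁` is the left-gcd of `s₁ s₂` and `Δ`. -/
theorem garsideMonoid_pair_normalisation {M : Type*} [Monoid M] (G : GarsideMonoid M)
    (s₁ s₂ : M) (h₁ : LDvd s₁ G.Δ) (h₂ : LDvd s₂ G.Δ) :
    (∃! p : M × M,
      LDvd p.1 G.Δ ∧ LDvd p.2 G.Δ ∧ p.1 * p.2 = s₁ * s₂ ∧ DNormal G [p.1, p.2]) ∧
    (∀ p : M × M, LDvd p.1 G.Δ → LDvd p.2 G.Δ → p.1 * p.2 = s₁ * s₂ →
      DNormal G [p.1, p.2] →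
      LDvd p.1 (s₁ * s₂) ∧ LDvd p.1 G.Δ ∧
        ∀ e : M, LDvd e (s₁ * s₂) → LDvd e G.Δ → LDvd e p.1) := by
  have gcd_of_normal : ∀ a b : M, LDvd a G.Δ → a * b = s₁ * s₂ → DNormal G [a, b] →
      IsLeftGcd a (s₁ * s₂) G.Δ := fun a b ha hab hn =>
    hab ▸ (G.dNormal_pair_iff_isLeftGcd ha).mp hn
  obtain ⟨d, hd⟩ := G.exists_left_gcd (s₁ * s₂) G.Δ
  obtain ⟨t, hdt⟩ := hd.1
  obtain ⟨u, hu⟩ := hd.2.2 s₁ ⟨s₂, rfl⟩ h₁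
  have hut : u * t = s₂ := G.mul_left_cancel s₁ _ _ (by rw [← mul_assoc, hu, hdt])
  have ht : LDvd t G.Δ := G.ldvd_delta_of_rdvd ⟨u, hut⟩ h₂
  have hnormal : DNormal G [d, t] := (G.dNormal_pair_iff_isLeftGcd hd.2.1).mpr (hdt ▸ hd)
  refine ⟨⟨(d, t), ⟨hd.2.1, ht, hdt, hnormal⟩, ?_⟩,
    fun p ha _ hab hn => gcd_of_normal _ _ ha hab hn⟩
  rintro ⟨a, b⟩ ⟨ha, -, hab, hn⟩
  obtain rfl : a = d := G.isLeftGcd_unique (gcd_of_normal a b ha hab hn) hd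
  rw [G.mul_left_cancel a b t (hab.trans hdt.symm)]
end

section
/- Let M be a left-cancellative monoid whose only invertible element is 1 and let S be a Garside family in M. Then for every S-word w of length p ≥ 2 there exists a unique S-normal S-word of length p representing the same element of M as w, and this word equals N̄^S_{δ_p}(w), where N̄^S maps a length-two S-word s|t to the unique S-normal length-two S-word s'|t' with s't' = st, N̄^S_i applies N̄^S at positions i, i+1, N̄^S_{i_1|…|i_n} := N̄^S_{i_n} ∘ ⋯ ∘ N̄^S_{i_1}, and δ_p is defined by δ_2 := 1 and δ_p := sh(δ_{p−1})|1|2|…|p−1 with sh shifting every entry by +1. -/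
/-- An `S`-word `s_1|…|s_p` is `S`-normal if, for every `i < p`, every `s ∈ S` and every
`f ∈ M`, `s ≼ f s_i s_{i+1}` implies `s ≼ f s_i`. -/
def SNormal {M : Type*} [Monoid M] (S : Set M) (L : List M) : Prop :=
  ∀ i : ℕ, i + 1 < L.length → ∀ s ∈ S, ∀ f : M,
    LDvd s (f * L.getD i 1 * L.getD (i + 1) 1) → LDvd s (f * L.getD i 1)

/-- `S` is a Garside family in `M` if `1 ∈ S` and every element of `M` admits an
`S`-normal decomposition. -/
def GarsideFamily {M : Type*} [Monoid M] (S : Set M) : Prop :=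
  (1 : M) ∈ S ∧ ∀ g : M, ∃ L : List M, (∀ x ∈ L, x ∈ S) ∧ SNormal S L ∧ L.prod = g

/-- Apply `F` to the entries at (1-based) positions `i, i+1` of a word. -/
def applyAt {α : Type*} (F : α × α → α × α) : ℕ → List α → List α
  | 1, a :: b :: t => (F (a, b)).1 :: (F (a, b)).2 :: t
  | n + 2, a :: t => a :: applyAt F (n + 1) t
  | _, l => l

/-- Apply `F` successively at the positions listed in `u` (leftmost entry first). -/
def applySeq {α : Type*} (F : α × α → α × α) (u : List ℕ) (w : List α) : List α :=
  u.foldl (fun v i => applyAt F i v) w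

/-- The sequence of positions `δ_p`: `δ_2 = 1` and `δ_p = sh(δ_{p−1})|1|2|…|p−1`,
where `sh` shifts every entry by `+1`. -/
def deltaSeq : ℕ → List ℕ
  | 0 => []
  | p + 1 => (deltaSeq p).map (· + 1) ++ (List.range p).map (· + 1)

def NormalPair {M : Type*} [Monoid M] (S : Set M) (s t : M) : Prop :=
  ∀ r ∈ S, ∀ f : M, LDvd r (f * s * t) → LDvd r (f * s)

def IsNormalizer {M : Type*} [Monoid M] (S : Set M) (F : M × M → M × M) : Prop :=
  ∀ s t : M, s ∈ S → t ∈ S →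
    (F (s, t)).1 ∈ S ∧ (F (s, t)).2 ∈ S ∧
    (F (s, t)).1 * (F (s, t)).2 = s * t ∧ SNormal S [(F (s, t)).1, (F (s, t)).2]

section Divisibility

variable {M : Type*} [Monoid M]

theorem LDvd.mul_right {s x : M} (h : LDvd s x) (y : M) : LDvd s (x * y) := by
  obtain ⟨c, rfl⟩ := h
  exact ⟨c * y, (mul_assoc s c y).symm⟩

theorem LDvd.antisymm [IsLeftCancelMul M] [Subsingleton Mˣ] {x y : M}
    (hxy : LDvd x y) (hyx : LDvd y x) : x = y := by
  obtain ⟨c, rfl⟩ := hxy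
  obtain ⟨b, hb⟩ := hyx
  have hcb : c * b = 1 := mul_left_cancel (a := x) (by rw [← mul_assoc, hb, mul_one])
  have hbc : b * c = 1 := mul_left_cancel (a := x * c) (by rw [← mul_assoc, hb, mul_one])
  have hc : c = 1 := isUnit_iff_eq_one.mp ⟨⟨c, b, hcb, hbc⟩, rfl⟩
  rw [hc, mul_one]

end Divisibility

section Normal

variable {M : Type*} [Monoid M] {S : Set M}

@[simp] theorem sNormal_nil : SNormal S [] := by
  intro i hi
  simp at hi

@[simp] theorem sNormal_singleton (x : M) : SNormal S [x] := by
  intro i hi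
  simp at hi

theorem sNormal_cons_cons_iff {x y : M} {L : List M} :
    SNormal S (x :: y :: L) ↔ NormalPair S x y ∧ SNormal S (y :: L) := by
  constructor
  · intro h
    refine ⟨fun r hr f hd => by simpa using h 0 (by simp) r hr f (by simpa using hd), ?_⟩
    intro i hi r hr f hd
    simpa using h (i + 1) (by simpa using hi) r hr f (by simpa using hd)
  · rintro ⟨hxy, hL⟩ (_ | i) hi r hr f hd
    · simpa using hxy r hr f (by simpa using hd)
    · simpa using hL i (by simpa using hi) r hr f (by simpa using hd)

theorem sNormal_pair_iff {x y : M} : SNormal S [x, y] ↔ NormalPair S x y := by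
  simp [sNormal_cons_cons_iff]

theorem SNormal.tail {x : M} {L : List M} (h : SNormal S (x :: L)) : SNormal S L := by
  cases L with
  | nil => exact sNormal_nil
  | cons y L => exact (sNormal_cons_cons_iff.mp h).2

theorem NormalPair.domino {a t₁ t₂ s₁ r₁ s₂ r₂ : M} (ht : NormalPair S t₁ t₂)
    (hs₁ : NormalPair S s₁ r₁) (h₁ : s₁ * r₁ = a * t₁) (h₂ : s₂ * r₂ = r₁ * t₂) :
    NormalPair S s₁ s₂ := by
  intro r hr f hd
  have hat : LDvd r (f * a * t₁ * t₂) := by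
    simpa only [mul_assoc, h₂, ← h₁] using hd.mul_right r₂
  have hsr : LDvd r (f * s₁ * r₁) := by
    simpa only [mul_assoc, h₁] using ht r hr (f * a) hat
  exact hs₁ r hr f hsr

theorem SNormal.ldvd_head {L : List M} (hL : SNormal S L) {r : M} (hr : r ∈ S) :
    ∀ {f : M}, LDvd r (f * L.prod) → LDvd r (f * L.headD 1) := by
  induction L with
  | nil => simp
  | cons x T ih =>
    intro f hd
    have hT : LDvd r (f * x * T.headD 1) := ih hL.tail (by simpa [mul_assoc] using hd)
    cases T with
    | nil => simpa using hT
    | cons y T => simpa using (sNormal_cons_cons_iff.mp hL).1 r hr f hT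

theorem SNormal.eq_of_prod_eq [IsLeftCancelMul M] [Subsingleton Mˣ] {u v : List M}
    (huS : ∀ x ∈ u, x ∈ S) (hvS : ∀ x ∈ v, x ∈ S) (hu : SNormal S u) (hv : SNormal S v)
    (hlen : u.length = v.length) (hprod : u.prod = v.prod) : u = v := by
  induction u generalizing v with
  | nil => exact (List.eq_nil_of_length_eq_zero hlen.symm).symm
  | cons x u ih =>
    cases v with
    | nil => simp at hlen
    | cons y v =>
      have hxy : x = y := by
        apply LDvd.antisymm
        · simpa using hv.ldvd_head (huS x (by simp)) (f := 1) ⟨u.prod, by simp [← hprod]⟩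
        · simpa using hu.ldvd_head (hvS y (by simp)) (f := 1) ⟨v.prod, by simp [hprod]⟩
      subst hxy
      rw [ih (fun z hz => huS z (by simp [hz])) (fun z hz => hvS z (by simp [hz])) hu.tail hv.tail
        (by simpa using hlen) (mul_left_cancel (a := x) (by simpa using hprod))]

end Normal

section Rewriting

variable {α : Type*} (F : α × α → α × α)

theorem applySeq_cons (i : ℕ) (u : List ℕ) (w : List α) :
    applySeq F (i :: u) w = applySeq F u (applyAt F i w) := rfl

theorem applySeq_append (u v : List ℕ) (w : List α) :
    applySeq F (u ++ v) w = applySeq F v (applySeq F u w) :=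
  List.foldl_append

theorem length_applyAt (i : ℕ) (w : List α) : (applyAt F i w).length = w.length := by
  fun_induction applyAt F i w <;> simp_all

theorem length_applySeq (u : List ℕ) (w : List α) : (applySeq F u w).length = w.length := by
  induction u generalizing w with
  | nil => rfl
  | cons i u ih => rw [applySeq_cons, ih, length_applyAt]

theorem applySeq_map_succ_cons {u : List ℕ} (hu : ∀ i ∈ u, 0 < i) (a : α) (w : List α) :
    applySeq F (u.map (· + 1)) (a :: w) = a :: applySeq F u w := by
  induction u generalizing w with
  | nil => rfl
  | cons i u ih =>
    obtain ⟨n, rfl⟩ : ∃ n, i = n + 1 := Nat.exists_eq_add_one.mpr (hu i (by simp))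
    exact ih (fun j hj => hu j (by simp [hj])) _

theorem applySeq_range_succ (n : ℕ) (a b : α) (w : List α) :
    applySeq F ((List.range (n + 1)).map (· + 1)) (a :: b :: w) =
      (F (a, b)).1 :: applySeq F ((List.range n).map (· + 1)) ((F (a, b)).2 :: w) := by
  rw [List.range_succ_eq_map, List.map_cons, applySeq_cons,
    show ((List.range n).map Nat.succ).map (· + 1) =
      ((List.range n).map (· + 1)).map (· + 1) from rfl]
  exact applySeq_map_succ_cons F (u := (List.range n).map (· + 1)) (by simp) _ _

theorem deltaSeq_pos {n i : ℕ} (hi : i ∈ deltaSeq n) : 0 < i := by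
  cases n with
  | zero => simp [deltaSeq] at hi
  | succ n =>
    simp only [deltaSeq, List.mem_append, List.mem_map] at hi
    omega

theorem applySeq_deltaSeq_cons (a : α) (w : List α) :
    applySeq F (deltaSeq (w.length + 1)) (a :: w) =
      applySeq F ((List.range w.length).map (· + 1)) (a :: applySeq F (deltaSeq w.length) w) := by
  rw [deltaSeq, applySeq_append, applySeq_map_succ_cons F (fun _ => deltaSeq_pos)]

end Rewriting

namespace IsNormalizer

variable {M : Type*} [Monoid M] {S : Set M} {F : M × M → M × M}

theorem mem_and_prod_applyAt (hF : IsNormalizer S F) (i : ℕ) {w : List M}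
    (hw : ∀ x ∈ w, x ∈ S) :
    (∀ x ∈ applyAt F i w, x ∈ S) ∧ (applyAt F i w).prod = w.prod := by
  fun_induction applyAt F i w with
  | case1 a b t =>
    obtain ⟨h₁, h₂, hprod, -⟩ := hF a b (hw a (by simp)) (hw b (by simp))
    refine ⟨?_, by simp [← mul_assoc, hprod]⟩
    simp only [List.mem_cons]
    rintro x (rfl | rfl | hx)
    exacts [h₁, h₂, hw x (by simp [hx])]
  | case2 n a t ih =>
    obtain ⟨hmem, hprod⟩ := ih (fun x hx => hw x (by simp [hx]))
    exact ⟨by simpa [hw a] using hmem, by simp [hprod]⟩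
  | case3 => exact ⟨hw, rfl⟩

theorem mem_and_prod_applySeq (hF : IsNormalizer S F) (u : List ℕ) {w : List M}
    (hw : ∀ x ∈ w, x ∈ S) :
    (∀ x ∈ applySeq F u w, x ∈ S) ∧ (applySeq F u w).prod = w.prod := by
  induction u generalizing w with
  | nil => exact ⟨hw, rfl⟩
  | cons i u ih =>
    obtain ⟨hmem, hprod⟩ := hF.mem_and_prod_applyAt i hw
    rw [applySeq_cons, ← hprod]
    exact ih hmem

theorem sNormal_applySeq_range (hF : IsNormalizer S F) :
    ∀ {a : M} {t : List M}, a ∈ S → (∀ x ∈ t, x ∈ S) → SNormal S t →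
      SNormal S (applySeq F ((List.range t.length).map (· + 1)) (a :: t))
  | _, [], _, _, _ => sNormal_singleton _
  | a, [b], ha, ht, _ => by
    rw [List.length_singleton, applySeq_range_succ]
    exact (hF a b ha (ht b (by simp))).2.2.2
  | a, b :: c :: t, ha, ht, hbct => by
    obtain ⟨-, hr₁, h₁, hs₁⟩ := hF a b ha (ht b (by simp))
    obtain ⟨-, -, h₂, -⟩ := hF (F (a, b)).2 c hr₁ (ht c (by simp))
    have hct : ∀ x ∈ c :: t, x ∈ S := fun x hx => ht x (List.mem_cons_of_mem b hx)
    have ih := hF.sNormal_applySeq_range hr₁ hct hbct.tail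
    rw [List.length_cons, applySeq_range_succ, List.length_cons, applySeq_range_succ]
    rw [List.length_cons, applySeq_range_succ] at ih
    refine sNormal_cons_cons_iff.mpr ⟨?_, ih⟩
    exact (sNormal_cons_cons_iff.mp hbct).1.domino (sNormal_pair_iff.mp hs₁) h₁ h₂

theorem sNormal_applySeq_deltaSeq (hF : IsNormalizer S F) {w : List M} (hw : ∀ x ∈ w, x ∈ S) :
    SNormal S (applySeq F (deltaSeq w.length) w) := by
  induction w with
  | nil => exact sNormal_nil
  | cons a w ih =>
    have hwS : ∀ x ∈ w, x ∈ S := fun x hx => hw x (List.mem_cons_of_mem a hx)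
    rw [List.length_cons, applySeq_deltaSeq_cons]
    have h := hF.sNormal_applySeq_range (hw a (by simp))
      (hF.mem_and_prod_applySeq _ hwS).1 (ih hwS)
    rwa [length_applySeq] at h

end IsNormalizer

theorem garsideFamily_deltaSeq_recipe_general {M : Type*} [Monoid M]
    (hcan : ∀ a b c : M, a * b = a * c → b = c)
    (hunit : ∀ a : M, IsUnit a → a = 1)
    (S : Set M)
    (NN : M × M → M × M)
    (hNN : ∀ s t : M, s ∈ S → t ∈ S →
      (NN (s, t)).1 ∈ S ∧ (NN (s, t)).2 ∈ S ∧
      (NN (s, t)).1 * (NN (s, t)).2 = s * t ∧ SNormal S [(NN (s, t)).1, (NN (s, t)).2])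
    (w : List M) (hw : ∀ x ∈ w, x ∈ S) :
    (∀ x ∈ applySeq NN (deltaSeq w.length) w, x ∈ S) ∧
    SNormal S (applySeq NN (deltaSeq w.length) w) ∧
    (applySeq NN (deltaSeq w.length) w).length = w.length ∧
    (applySeq NN (deltaSeq w.length) w).prod = w.prod ∧
    (∀ v : List M, (∀ x ∈ v, x ∈ S) → SNormal S v → v.length = w.length →
      v.prod = w.prod → v = applySeq NN (deltaSeq w.length) w) := by
  have : IsLeftCancelMul M := ⟨hcan⟩
  have : Subsingleton Mˣ :=
    ⟨fun u v => Units.ext ((hunit _ u.isUnit).trans (hunit _ v.isUnit).symm)⟩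
  have hF : IsNormalizer S NN := hNN
  obtain ⟨hmem, hprod⟩ := hF.mem_and_prod_applySeq (deltaSeq w.length) hw
  have hnormal := hF.sNormal_applySeq_deltaSeq hw
  have hlen := length_applySeq NN (deltaSeq w.length) w
  refine ⟨hmem, hnormal, hlen, hprod, fun v hvS hv hvlen hvprod => ?_⟩
  exact SNormal.eq_of_prod_eq hvS hmem hv hnormal (hvlen.trans hlen.symm) (hvprod.trans hprod.symm)

/-- If `M` is a left-cancellative monoid whose only invertible element
is `1` and `S` is a Garside family in `M`, then for every `S`-word `w` of length `p ≥ 2`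
there is a unique `S`-normal `S`-word of length `p` with the same product as `w`, and it
equals `N̄^S_{δ_p}(w)`, where `N̄^S` maps a length-two `S`-word to the unique `S`-normal
length-two `S`-word with the same product. -/
theorem garsideFamily_deltaSeq_recipe {M : Type*} [Monoid M]
    (hcan : ∀ a b c : M, a * b = a * c → b = c)
    (hunit : ∀ a : M, IsUnit a → a = 1)
    (S : Set M) (hS : GarsideFamily S)
    (NN : M × M → M × M)
    (hNN : ∀ s t : M, s ∈ S → t ∈ S →
      (NN (s, t)).1 ∈ S ∧ (NN (s, t)).2 ∈ S ∧
      (NN (s, t)).1 * (NN (s, t)).2 = s * t ∧ SNormal S [(NN (s, t)).1, (NN (s, t)).2])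
    (w : List M) (hw : ∀ x ∈ w, x ∈ S) (hp : 2 ≤ w.length) :
    (∀ x ∈ applySeq NN (deltaSeq w.length) w, x ∈ S) ∧
    SNormal S (applySeq NN (deltaSeq w.length) w) ∧
    (applySeq NN (deltaSeq w.length) w).length = w.length ∧
    (applySeq NN (deltaSeq w.length) w).prod = w.prod ∧
    (∀ v : List M, (∀ x ∈ v, x ∈ S) → SNormal S v → v.length = w.length →
      v.prod = w.prod → v = applySeq NN (deltaSeq w.length) w) :=
  garsideFamily_deltaSeq_recipe_general hcan hunit S NN hNN w hw
end
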